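/- arXiv:2305.11134 — 3 statements merged into one kernel-verified Lean document; each statement's English description precedes it below -/
import Mathlib

section
/- The function s ↦ u_n(s) defined by the trapezoidal recursion u_0(s) = 0 and u_n(s) = u_{n-1}(s)·(2+Δ_n s)/(2-Δ_n s) + (g_{n-1} + g_n)·Δ_n/(2-Δ_n s) admits the closed form u_n(s) = Σ_{j=1}^{n} g_j · D_j^n · ∏_{k=j+2}^{n}(2/Δ_k + s) · ∏_{k=j}^{n}(2/Δ_k - s)^{-1}, where D_j^n = 2(1/Δ_j + 1/Δ_{j+1}) for j < n and D_n^n = 1. -/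
/-!
Write `a k = 2/Δ_k - s` and `b k = 2/Δ_k + s`; after dividing by `Δ_n` the trapezoidal step reads
`u_n = u_{n-1} · b_n / a_n + (g_{n-1} + g_n) / a_n`. Each later step multiplies the contribution of
`g_j` by `b_{n+1} / a_{n+1}`, except that `g_j` also enters directly in step `j + 1`; merging the two
contributions gives `1/a_j · b_{j+1}/a_{j+1} + 1/a_{j+1} = (a_j + b_{j+1}) / (a_j a_{j+1})`, and
`a_j + b_{j+1} = 2 (1/Δ_j + 1/Δ_{j+1})` is the factor `D_j^n`.
-/

open Finset

section TrapezoidalRecursion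

variable {K : Type*} [Field K] (a b g : ℕ → K)

/-- The coefficient of `g j` in the `n`-th iterate of `u ↦ u · b / a + (g + g') / a`. -/
def trapezoidalWeight (n j : ℕ) : K :=
  (if j < n then a j + b (j + 1) else 1) * (∏ k ∈ Icc (j + 2) n, b k) * (∏ k ∈ Icc j n, a k)⁻¹

def trapezoidalSolution (n : ℕ) : K :=
  ∑ j ∈ range (n + 1), g j * trapezoidalWeight a b n j

theorem trapezoidalWeight_self (n : ℕ) : trapezoidalWeight a b n n = (a n)⁻¹ := by
  simp [trapezoidalWeight]

theorem trapezoidalWeight_succ_of_lt {n j : ℕ} (hj : j < n) :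
    trapezoidalWeight a b (n + 1) j = trapezoidalWeight a b n j * (b (n + 1) / a (n + 1)) := by
  rw [trapezoidalWeight, trapezoidalWeight, if_pos hj, if_pos (by omega),
    prod_Icc_succ_top (by omega), prod_Icc_succ_top (by omega), mul_inv]
  ring

theorem trapezoidalWeight_succ_self {n : ℕ} (hn : a n ≠ 0) :
    trapezoidalWeight a b (n + 1) n
      = trapezoidalWeight a b n n * (b (n + 1) / a (n + 1)) + (a (n + 1))⁻¹ := by
  rw [trapezoidalWeight_self, trapezoidalWeight, if_pos n.lt_succ_self,
    Icc_eq_empty (by omega), prod_empty, prod_Icc_succ_top (by omega), Icc_self, prod_singleton]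
  field_simp
  ring

theorem trapezoidalSolution_succ {n : ℕ} (hn : a n ≠ 0) :
    trapezoidalSolution a b g (n + 1)
      = trapezoidalSolution a b g n * (b (n + 1) / a (n + 1)) + (g n + g (n + 1)) * (a (n + 1))⁻¹ := by
  have h_lt : ∑ j ∈ range n, g j * trapezoidalWeight a b (n + 1) j
      = (∑ j ∈ range n, g j * trapezoidalWeight a b n j) * (b (n + 1) / a (n + 1)) := by
    rw [sum_mul]
    refine sum_congr rfl fun j hj => ?_
    rw [trapezoidalWeight_succ_of_lt a b (mem_range.mp hj), mul_assoc]
  rw [trapezoidalSolution, trapezoidalSolution, sum_range_succ, sum_range_succ, sum_range_succ,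
    h_lt, trapezoidalWeight_succ_self a b hn, trapezoidalWeight_self, trapezoidalWeight_self]
  ring

theorem trapezoidalSolution_eq_sum_Icc (hg0 : g 0 = 0) (n : ℕ) :
    trapezoidalSolution a b g n = ∑ j ∈ Icc 1 n, g j * trapezoidalWeight a b n j := by
  refine (sum_subset (fun j hj => ?_) fun j hj hj' => ?_).symm
  · simp only [mem_Icc, mem_range] at hj ⊢
    omega
  · obtain rfl : j = 0 := by
      simp only [mem_Icc, mem_range] at hj hj'
      omega
    rw [hg0, zero_mul]

theorem eq_trapezoidalSolution_of_recursion {N : ℕ} {u : ℕ → K} (ha : ∀ k, a k ≠ 0)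
    (hu0 : u 0 = trapezoidalSolution a b g 0)
    (hu : ∀ n < N, u (n + 1) = u n * (b (n + 1) / a (n + 1)) + (g n + g (n + 1)) * (a (n + 1))⁻¹) :
    ∀ n ≤ N, u n = trapezoidalSolution a b g n := by
  intro n hn
  induction n with
  | zero => exact hu0
  | succ n ih => rw [hu n hn, ih (by omega), trapezoidalSolution_succ a b g (ha n)]

end TrapezoidalRecursion

theorem trapezoidal_recursion_closed_form
    (N : ℕ) (Δ : ℕ → ℝ) (hΔ : ∀ k, 0 < Δ k)
    (g : ℕ → ℂ) (hg0 : g 0 = 0) (s : ℂ)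
    (hs : ∀ k, (2 : ℂ) - (Δ k : ℂ) * s ≠ 0)
    (u : ℕ → ℂ) (hu0 : u 0 = 0)
    (hu : ∀ n, 1 ≤ n → n ≤ N →
      u n = u (n - 1) * ((2 + (Δ n : ℂ) * s) / (2 - (Δ n : ℂ) * s))
            + (g (n - 1) + g n) * ((Δ n : ℂ) / (2 - (Δ n : ℂ) * s))) :
    ∀ n, n ≤ N →
      u n = ∑ j ∈ Finset.Icc 1 n,
        g j * (if j < n then 2 * (1 / (Δ j : ℂ) + 1 / (Δ (j + 1) : ℂ)) else 1)
          * (∏ k ∈ Finset.Icc (j + 2) n, (2 / (Δ k : ℂ) + s))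
          * (∏ k ∈ Finset.Icc j n, (2 / (Δ k : ℂ) - s))⁻¹ := by
  have hΔ0 : ∀ k, (Δ k : ℂ) ≠ 0 := fun k => Complex.ofReal_ne_zero.mpr (hΔ k).ne'
  set a : ℕ → ℂ := fun k => 2 / (Δ k : ℂ) - s
  set b : ℕ → ℂ := fun k => 2 / (Δ k : ℂ) + s
  have h_sub : ∀ k, 2 - (Δ k : ℂ) * s = Δ k * a k := fun k => by
    rw [mul_sub, mul_div_cancel₀ _ (hΔ0 k)]
  have h_add : ∀ k, 2 + (Δ k : ℂ) * s = Δ k * b k := fun k => by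
    rw [mul_add, mul_div_cancel₀ _ (hΔ0 k)]
  have ha : ∀ k, a k ≠ 0 := fun k h => hs k (by rw [h_sub, h, mul_zero])
  have hrec : ∀ n < N,
      u (n + 1) = u n * (b (n + 1) / a (n + 1)) + (g n + g (n + 1)) * (a (n + 1))⁻¹ := by
    intro n hn
    rw [hu (n + 1) (by omega) hn, Nat.add_sub_cancel, h_sub, h_add,
      mul_div_mul_left _ _ (hΔ0 _), div_mul_cancel_left₀ (hΔ0 _)]
  intro n hn
  rw [eq_trapezoidalSolution_of_recursion a b g ha (by simp [trapezoidalSolution, hg0, hu0]) hrec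
    n hn, trapezoidalSolution_eq_sum_Icc a b g hg0]
  refine sum_congr rfl fun j _ => ?_
  have hD : a j + b (j + 1) = 2 * (1 / (Δ j : ℂ) + 1 / (Δ (j + 1) : ℂ)) := by ring
  rw [trapezoidalWeight, hD]
  ring
end

section
/- (Leibniz rule for modified divided differences) Given n+1 distinct complex points x_0, …, x_n and functions f, g defined at these points, one has ⟨x_0,…,x_n⟩(fg) = Σ_{k=0}^{n} ⟨x_0,…,x_k⟩f · ⟨x_k,…,x_n⟩g. -/
/-- Auxiliary: divided difference over points `x m, …, x (m+g)`. -/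
noncomputable def ddAux (x : ℕ → ℂ) (f : ℂ → ℂ) : ℕ → ℕ → ℂ
  | 0, m => f (x m)
  | g + 1, m => (ddAux x f g m - ddAux x f g (m + 1)) / (x m - x (m + (g + 1)))

/-- Newton divided difference `[x_m, …, x_j] f`. -/
noncomputable def dd (x : ℕ → ℂ) (f : ℂ → ℂ) (m j : ℕ) : ℂ := ddAux x f (j - m) m

/-- Modified divided difference `⟨x_m, …, x_j⟩ f`. -/
noncomputable def mdd (x : ℕ → ℂ) (f : ℂ → ℂ) (m j : ℕ) : ℂ :=
  if m < j then
    (x m + x (m + 1)) *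
      dd x (fun z => f z * ∏ k ∈ Finset.Icc (m + 2) j, (x k + z)) m j
  else f (x j)

/-!
Both sides depend only on the values of `f` at the nodes, so `f` may be replaced by an
interpolating polynomial. The functions `p` for which the rule holds against every `g` on every
interval of nodes contain the constants (over two or more nodes, a modified divided difference of a
constant is a divided difference of a polynomial of too small degree) and are closed under sums
and under `p ↦ z * p`. The last closure property comes from the recurrence
`⟨x_m,…,x_j⟩(z p) = x_m ⟨x_m,…,x_j⟩p + (x_m + x_{m+1}) ∑_{m<k≤j} ⟨x_k,…,x_j⟩p`,
a consequence of the Leibniz rule for a linear factor `c + z` and of the telescoping identity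
`[x_m,…,x_j](p ∏_{m<k≤j} (x_k + ·)) = ∑_{m≤i≤j} ⟨x_i,…,x_j⟩p`, followed by an exchange of the order
of summation.
-/

open Finset Polynomial

section DividedDifference

variable {x : ℕ → ℂ}

theorem ddAux_congr {f f' : ℂ → ℂ} :
    ∀ {g m : ℕ}, (∀ i ∈ Set.Icc m (m + g), f (x i) = f' (x i)) →
      ddAux x f g m = ddAux x f' g m
  | 0, m, h => h m ⟨le_rfl, le_rfl⟩
  | g + 1, m, h => by
    rw [ddAux, ddAux, ddAux_congr fun i hi => h i ⟨hi.1, by grind⟩,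
      ddAux_congr fun i hi => h i ⟨by grind, by grind⟩]

theorem ddAux_add (f h : ℂ → ℂ) :
    ∀ g m, ddAux x (fun z => f z + h z) g m = ddAux x f g m + ddAux x h g m
  | 0, _ => rfl
  | g + 1, m => by
    rw [ddAux, ddAux, ddAux, ddAux_add f h g m, ddAux_add f h g (m + 1)]
    ring

theorem ddAux_const_mul (c : ℂ) (f : ℂ → ℂ) :
    ∀ g m, ddAux x (fun z => c * f z) g m = c * ddAux x f g m
  | 0, _ => rfl
  | g + 1, m => by
    rw [ddAux, ddAux, ddAux_const_mul c f g m, ddAux_const_mul c f g (m + 1)]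
    ring

theorem ddAux_const_succ (c : ℂ) : ∀ g m, ddAux x (fun _ => c) (g + 1) m = 0
  | 0, _ => by simp [ddAux]
  | g + 1, m => by rw [ddAux, ddAux_const_succ c g m, ddAux_const_succ c g (m + 1)]; simp

theorem ddAux_add_mul (c : ℂ) (f : ℂ → ℂ) :
    ∀ g m, Set.InjOn x (Set.Icc m (m + g + 1)) →
      ddAux x (fun z => (c + z) * f z) (g + 1) m
        = (c + x m) * ddAux x f (g + 1) m + ddAux x f g (m + 1)
  | 0, m, hx => by
    have : x m - x (m + 1) ≠ 0 :=
      sub_ne_zero.mpr <| hx.ne ⟨le_rfl, by omega⟩ ⟨by omega, le_rfl⟩ (by omega)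
    simp only [ddAux]
    field_simp
    ring
  | g + 1, m, hx => by
    have h₀ : x m - x (m + g + 2) ≠ 0 :=
      sub_ne_zero.mpr <| hx.ne ⟨le_rfl, by omega⟩ ⟨by omega, le_rfl⟩ (by omega)
    have h₁ : x (m + 1) - x (m + g + 2) ≠ 0 :=
      sub_ne_zero.mpr <| hx.ne ⟨by omega, by omega⟩ ⟨by omega, le_rfl⟩ (by omega)
    have ih₀ := ddAux_add_mul c f g m (hx.mono <| Set.Icc_subset_Icc le_rfl (by omega))
    have ih₁ := ddAux_add_mul c f g (m + 1) (hx.mono <| Set.Icc_subset_Icc (by omega) (by omega))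
    simp only [ddAux] at ih₀ ih₁ ⊢
    simp only [show m + 1 + (g + 1) = m + g + 2 by omega, show m + (g + 1 + 1) = m + g + 2 by omega,
      show m + (g + 1) = m + g + 1 by omega] at ih₀ ih₁ ⊢
    rw [ih₀, ih₁]
    field_simp
    ring

theorem ddAux_prod_add_eq_zero (c : ℕ → ℂ) (s : Finset ℕ) :
    ∀ g m, #s ≤ g → Set.InjOn x (Set.Icc m (m + g + 1)) →
      ddAux x (fun z => ∏ k ∈ s, (c k + z)) (g + 1) m = 0 := by
  induction s using Finset.induction_on with
  | empty => intro g m _ _; simpa using ddAux_const_succ 1 g m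
  | insert a s ha ih =>
    intro g m hcard hx
    rw [card_insert_of_notMem ha] at hcard
    obtain ⟨g, rfl⟩ := Nat.exists_eq_add_of_lt hcard
    simp only [prod_insert ha]
    rw [ddAux_add_mul _ _ _ _ hx, ih _ m (by omega) hx,
      ih _ (m + 1) (by omega) (hx.mono <| Set.Icc_subset_Icc (by omega) (by omega))]
    ring

theorem dd_add_mul (c : ℂ) (f : ℂ → ℂ) {m j : ℕ} (hmj : m < j) (hx : Set.InjOn x (Set.Icc m j)) :
    dd x (fun z => (c + z) * f z) m j = (c + x m) * dd x f m j + dd x f (m + 1) j := by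
  obtain ⟨d, rfl⟩ := Nat.exists_eq_add_of_lt hmj
  simp only [dd, show m + d + 1 - m = d + 1 by omega, show m + d + 1 - (m + 1) = d by omega]
  exact ddAux_add_mul c f d m hx

theorem mdd_self (f : ℂ → ℂ) (j : ℕ) : mdd x f j j = f (x j) := if_neg (lt_irrefl j)

theorem mdd_of_lt (f : ℂ → ℂ) {m j : ℕ} (hmj : m < j) :
    mdd x f m j = (x m + x (m + 1)) * dd x (fun z => f z * ∏ k ∈ Icc (m + 2) j, (x k + z)) m j :=
  if_pos hmj

theorem mdd_congr {f f' : ℂ → ℂ} {m j : ℕ} (hmj : m ≤ j)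
    (h : ∀ i ∈ Set.Icc m j, f (x i) = f' (x i)) : mdd x f m j = mdd x f' m j := by
  obtain hlt | rfl := hmj.lt_or_eq
  · rw [mdd_of_lt _ hlt, mdd_of_lt _ hlt, dd]
    congr 1
    refine ddAux_congr fun i hi => ?_
    rw [h i ⟨hi.1, by grind⟩]
  · rw [mdd_self, mdd_self, h m ⟨le_rfl, le_rfl⟩]

theorem mdd_add (f h : ℂ → ℂ) (m j : ℕ) :
    mdd x (fun z => f z + h z) m j = mdd x f m j + mdd x h m j := by
  obtain hlt | hle := lt_or_ge m j
  · simp only [mdd_of_lt _ hlt, dd, add_mul, ddAux_add]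
    ring
  · simp only [mdd, if_neg hle.not_gt]

theorem mdd_const_mul (c : ℂ) (f : ℂ → ℂ) (m j : ℕ) :
    mdd x (fun z => c * f z) m j = c * mdd x f m j := by
  obtain hlt | hle := lt_or_ge m j
  · simp only [mdd_of_lt _ hlt, dd, mul_assoc, ddAux_const_mul]
    ring
  · simp only [mdd, if_neg hle.not_gt]

theorem mdd_const_of_lt (c : ℂ) {m j : ℕ} (hmj : m < j) (hx : Set.InjOn x (Set.Icc m j)) :
    mdd x (fun _ => c) m j = 0 := by
  obtain ⟨d, rfl⟩ := Nat.exists_eq_add_of_lt hmj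
  rw [mdd_of_lt _ hmj, dd, show m + d + 1 - m = d + 1 by omega, ddAux_const_mul,
    ddAux_prod_add_eq_zero x _ d m (by simp) hx]
  ring

theorem dd_mul_prod_eq_sum_mdd (h : ℂ → ℂ) {m j : ℕ} (hmj : m ≤ j)
    (hx : Set.InjOn x (Set.Icc m j)) :
    dd x (fun z => h z * ∏ k ∈ Icc (m + 1) j, (x k + z)) m j = ∑ i ∈ Icc m j, mdd x h i j := by
  induction hmj using Nat.decreasingInduction with
  | self => simp [dd, ddAux, mdd_self]
  | of_succ m hmj ih =>
    rw [← insert_Icc_add_one_left_eq_Icc hmj.le, sum_insert (by simp),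
      ← ih (hx.mono <| Set.Icc_subset_Icc (by omega) le_rfl), mdd_of_lt _ hmj,
      ← insert_Icc_add_one_left_eq_Icc (by omega : m + 1 ≤ j)]
    simp only [prod_insert (by simp : m + 1 ∉ Icc (m + 1 + 1) j), mul_left_comm (h _)]
    rw [dd_add_mul _ _ hmj hx]
    ring

theorem mdd_id_mul (p : ℂ → ℂ) {m j : ℕ} (hmj : m ≤ j) (hx : Set.InjOn x (Set.Icc m j)) :
    mdd x (fun z => z * p z) m j
      = x m * mdd x p m j + (x m + x (m + 1)) * ∑ k ∈ Icc (m + 1) j, mdd x p k j := by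
  obtain hlt | rfl := hmj.lt_or_eq
  · have hx' := hx.mono <| Set.Icc_subset_Icc (Nat.le_succ m) le_rfl
    have hshift := dd_add_mul 0 (fun z => p z * ∏ k ∈ Icc (m + 2) j, (x k + z)) hlt hx
    simp only [zero_add] at hshift
    rw [mdd_of_lt _ hlt, mdd_of_lt _ hlt, ← dd_mul_prod_eq_sum_mdd p hlt hx']
    simp only [mul_assoc, hshift]
    ring
  · simp [mdd_self]

end DividedDifference

def MddLeibniz (x : ℕ → ℂ) (p : ℂ → ℂ) : Prop :=
  ∀ (g : ℂ → ℂ) (m j : ℕ), m ≤ j → Set.InjOn x (Set.Icc m j) →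
    mdd x (fun z => p z * g z) m j = ∑ k ∈ Icc m j, mdd x p m k * mdd x g k j

namespace MddLeibniz

variable {x : ℕ → ℂ}

theorem const (c : ℂ) : MddLeibniz x fun _ => c := by
  intro g m j hmj hx
  rw [mdd_const_mul, sum_eq_single_of_mem m (by simp [hmj]), mdd_self]
  intro k hk hkm
  rw [mdd_const_of_lt c (by grind) (hx.mono <| Set.Icc_subset_Icc le_rfl (by grind)), zero_mul]

theorem add {p q : ℂ → ℂ} (hp : MddLeibniz x p) (hq : MddLeibniz x q) :
    MddLeibniz x fun z => p z + q z := by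
  intro g m j hmj hx
  simp only [add_mul, mdd_add, hp g m j hmj hx, hq g m j hmj hx, sum_add_distrib]

theorem id_mul {p : ℂ → ℂ} (hp : MddLeibniz x p) : MddLeibniz x fun z => z * p z := by
  intro g m j hmj hx
  have sub {a b} (ha : m ≤ a) (hb : b ≤ j) : Set.InjOn x (Set.Icc a b) :=
    hx.mono <| Set.Icc_subset_Icc ha hb
  have swap : ∑ l ∈ Icc (m + 1) j, ∑ k ∈ Icc l j, mdd x p l k * mdd x g k j
      = ∑ k ∈ Icc m j, ∑ l ∈ Icc (m + 1) k, mdd x p l k * mdd x g k j :=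
    sum_comm' fun l k => by simp only [mem_Icc]; omega
  calc mdd x (fun z => z * p z * g z) m j
      = x m * mdd x (fun z => p z * g z) m j
          + (x m + x (m + 1)) * ∑ l ∈ Icc (m + 1) j, mdd x (fun z => p z * g z) l j := by
        simp only [mul_assoc, mdd_id_mul _ hmj hx]
    _ = x m * ∑ k ∈ Icc m j, mdd x p m k * mdd x g k j
          + (x m + x (m + 1)) * ∑ l ∈ Icc (m + 1) j, ∑ k ∈ Icc l j, mdd x p l k * mdd x g k j := by
        rw [hp g m j hmj hx]
        congr 2
        exact sum_congr rfl fun l hl => hp g l j (mem_Icc.mp hl).2 (sub (by grind) le_rfl)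
    _ = ∑ k ∈ Icc m j, mdd x (fun z => z * p z) m k * mdd x g k j := by
        rw [swap, mul_sum, mul_sum, ← sum_add_distrib]
        refine sum_congr rfl fun k hk => ?_
        rw [mdd_id_mul _ (mem_Icc.mp hk).1 (sub le_rfl (mem_Icc.mp hk).2)]
        simp only [add_mul, mul_assoc, sum_mul]

theorem polynomial_eval (p : ℂ[X]) : MddLeibniz x p.eval := by
  induction p using Polynomial.induction_on with
  | C c => simpa using const c
  | add p q hp hq => simpa using hp.add hq
  | monomial n c h =>
    convert h.id_mul using 2 with z
    simp only [eval_mul, eval_C, eval_pow, eval_X]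
    ring

end MddLeibniz

/-- Leibniz rule for modified divided differences. -/
theorem mdd_leibniz (x : ℕ → ℂ) (n : ℕ)
    (hdist : ∀ i j, i ≤ n → j ≤ n → i ≠ j → x i ≠ x j)
    (f g : ℂ → ℂ) :
    mdd x (fun z => f z * g z) 0 n
      = ∑ k ∈ Finset.range (n + 1), mdd x f 0 k * mdd x g k n := by
  have hx : Set.InjOn x (Set.Icc 0 n) := fun i hi j hj hij =>
    by_contra fun hne => hdist i j hi.2 hj.2 hne hij
  set p := Lagrange.interpolate (Icc 0 n) x (f ∘ x)
  have hp : ∀ i ∈ Set.Icc 0 n, p.eval (x i) = f (x i) := fun i hi =>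
    Lagrange.eval_interpolate_at_node (s := Icc 0 n) (f ∘ x) (by simpa) (by simpa using hi)
  have hfg : mdd x (fun z => f z * g z) 0 n = mdd x (fun z => p.eval z * g z) 0 n :=
    mdd_congr n.zero_le fun i hi => by rw [hp i hi]
  rw [hfg, MddLeibniz.polynomial_eval p g 0 n n.zero_le hx, Nat.range_succ_eq_Icc_zero]
  refine sum_congr rfl fun k hk => ?_
  rw [mdd_congr k.zero_le fun i hi => hp i ⟨hi.1, hi.2.trans (mem_Icc.mp hk).2⟩]
end

section
/- Given distinct points x_0,…,x_n ∈ ℂ, define P_m^j(z) := ∏_{k=m}^{j}(x_k + z) and D_m^j(f) := [x_m,…,x_j]f. Then for all 2 ≤ ℓ ≤ j ≤ n−2, Σ_{k=ℓ}^{j} D_ℓ^k(P_2^k) · D_k^k(P_{k+1}^{k+1}) · D_k^j(P_{k+2}^n) = D_ℓ^j(P_2^n). -/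
/-!
Write `P_a^m z = ∏_{a ≤ t ≤ m} (c_t + z)` and `[l..i]` for the divided difference on
`x_l, …, x_i`. By the Leibniz rule, `T_m = ∑_{l ≤ i < m} [l..i] P_a^m · [i..j] P_{m+1}^N` is a
truncation of the expansion of `[l..j] P_a^N`, complete at `m = j + 1` and empty at `m = l`.
Passing the linear factor `c_{m+1} + z` from `P_a^{m+1}` to `P_{m+1}^N`, with
`[l..i] (f · (w + z)) = (w + x_i) [l..i] f + [l..i-1] f` and its mirror image, shows that
`T_{m+1} - T_m` is the `m`-th summand, so the sum telescopes.
-/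

open Finset

noncomputable def linearProd (c : ℕ → ℂ) (m j : ℕ) (z : ℂ) : ℂ :=
  ∏ k ∈ Icc m j, (c k + z)

section DividedDifference

variable {x : ℕ → ℂ}

theorem dd_self (f : ℂ → ℂ) (m : ℕ) : dd x f m m = f (x m) := by
  simp [dd, ddAux]

theorem dd_succ (f : ℂ → ℂ) {m j : ℕ} (h : m ≤ j) :
    dd x f m (j + 1) = (dd x f m j - dd x f (m + 1) (j + 1)) / (x m - x (j + 1)) := by
  obtain ⟨d, rfl⟩ := Nat.exists_eq_add_of_le h
  rw [dd, dd, dd, show m + d + 1 - m = d + 1 by omega, show m + d - m = d by omega,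
    show m + d + 1 - (m + 1) = d by omega, show m + d + 1 = m + (d + 1) by omega]
  rfl

theorem sub_mul_dd (f : ℂ → ℂ) {m j : ℕ} (h : m < j) (hx : x m ≠ x j) :
    (x m - x j) * dd x f m j = dd x f m (j - 1) - dd x f (m + 1) j := by
  obtain ⟨j, rfl⟩ := Nat.exists_eq_add_of_lt h
  rw [dd_succ f (by omega), mul_div_cancel₀ _ (sub_ne_zero.2 hx)]
  rfl

theorem sub_mul_sum_dd_mul_dd (f g : ℂ → ℂ) {m j : ℕ} (hmj : m ≤ j)
    (hx : Set.InjOn x (Set.Icc m (j + 1))) :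
    (x m - x (j + 1)) * ∑ i ∈ Icc m (j + 1), dd x f m i * dd x g i (j + 1)
      = ∑ i ∈ Icc m j, dd x f m i * dd x g i j
        - ∑ i ∈ Icc (m + 1) (j + 1), dd x f (m + 1) i * dd x g i (j + 1) := by
  have hshift : ∑ i ∈ Icc (m + 1) (j + 1), dd x f m (i - 1) * dd x g i (j + 1)
      = ∑ i ∈ Icc m j, dd x f m i * dd x g (i + 1) (j + 1) := by
    rw [← map_add_right_Icc, sum_map]
    simp
  calc (x m - x (j + 1)) * ∑ i ∈ Icc m (j + 1), dd x f m i * dd x g i (j + 1)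
      = ∑ i ∈ Icc m (j + 1), (x m - x i) * dd x f m i * dd x g i (j + 1)
        + ∑ i ∈ Icc m (j + 1), dd x f m i * ((x i - x (j + 1)) * dd x g i (j + 1)) := by
        rw [mul_sum, ← sum_add_distrib]
        exact sum_congr rfl fun i _ => by ring
    _ = ∑ i ∈ Icc (m + 1) (j + 1), (dd x f m (i - 1) - dd x f (m + 1) i) * dd x g i (j + 1)
        + ∑ i ∈ Icc m j, dd x f m i * (dd x g i j - dd x g (i + 1) (j + 1)) := by
        congr 1
        · rw [← add_sum_Ioc_eq_sum_Icc (by omega), sub_self, zero_mul, zero_mul, zero_add,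
            ← Icc_add_one_left_eq_Ioc]
          refine sum_congr rfl fun i hi => ?_
          have := mem_Icc.1 hi
          rw [sub_mul_dd f (by omega)
            (hx.ne ⟨by omega, by omega⟩ ⟨by omega, by omega⟩ (by omega))]
        · rw [sum_Icc_succ_top (by omega), sub_self, zero_mul, mul_zero, add_zero]
          refine sum_congr rfl fun i hi => ?_
          have := mem_Icc.1 hi
          rw [sub_mul_dd g (by omega)
            (hx.ne ⟨by omega, by omega⟩ ⟨by omega, by omega⟩ (by omega)), Nat.add_sub_cancel]
    _ = _ := by
        simp only [sub_mul, mul_sub, sum_sub_distrib, hshift]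
        ring

theorem dd_mul (f g : ℂ → ℂ) {m j : ℕ} (hmj : m ≤ j) (hx : Set.InjOn x (Set.Icc m j)) :
    dd x (fun z => f z * g z) m j = ∑ i ∈ Icc m j, dd x f m i * dd x g i j := by
  induction hd : j - m generalizing m j with
  | zero =>
    obtain rfl : j = m := by omega
    simp [dd_self]
  | succ d ih =>
    obtain ⟨j, rfl⟩ : ∃ j', j = j' + 1 := ⟨j - 1, by omega⟩
    have hne : x m - x (j + 1) ≠ 0 :=
      sub_ne_zero.2 (hx.ne ⟨le_rfl, hmj⟩ ⟨hmj, le_rfl⟩ (by omega))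
    rw [dd_succ _ (by omega),
      ih (m := m) (j := j) (by omega) (hx.mono (Set.Icc_subset_Icc_right (by omega))) (by omega),
      ih (m := m + 1) (j := j + 1) (by omega) (hx.mono (Set.Icc_subset_Icc_left (by omega)))
        (by omega),
      div_eq_iff hne, mul_comm, sub_mul_sum_dd_mul_dd f g (by omega) hx]

theorem dd_linear_succ (w : ℂ) (m : ℕ) (hx : x m ≠ x (m + 1)) :
    dd x (fun z => w + z) m (m + 1) = 1 := by
  rw [dd_succ _ le_rfl, dd_self, dd_self, div_eq_one_iff_eq (sub_ne_zero.2 hx)]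
  ring

theorem dd_linear_eq_zero (w : ℂ) {m j : ℕ} (hmj : m + 2 ≤ j)
    (hx : Set.InjOn x (Set.Icc m j)) :
    dd x (fun z => w + z) m j = 0 := by
  induction hd : j - (m + 2) generalizing m j with
  | zero =>
    obtain rfl : j = m + 1 + 1 := by omega
    rw [dd_succ _ (by omega),
      dd_linear_succ w m (hx.ne ⟨le_rfl, by omega⟩ ⟨by omega, by omega⟩ (by omega)),
      dd_linear_succ w (m + 1) (hx.ne ⟨by omega, by omega⟩ ⟨by omega, le_rfl⟩ (by omega)),
      sub_self, zero_div]
  | succ d ih =>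
    obtain ⟨j, rfl⟩ : ∃ j', j = j' + 1 := ⟨j - 1, by omega⟩
    rw [dd_succ _ (by omega),
      ih (m := m) (j := j) (by omega) (hx.mono (Set.Icc_subset_Icc_right (by omega))) (by omega),
      ih (m := m + 1) (j := j + 1) (by omega) (hx.mono (Set.Icc_subset_Icc_left (by omega)))
        (by omega),
      sub_self, zero_div]

theorem dd_mul_linear (f : ℂ → ℂ) (w : ℂ) {m j : ℕ} (hmj : m < j)
    (hx : Set.InjOn x (Set.Icc m j)) :
    dd x (fun z => f z * (w + z)) m j = (w + x j) * dd x f m j + dd x f m (j - 1) := by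
  obtain ⟨j, rfl⟩ := Nat.exists_eq_add_of_lt hmj
  rw [dd_mul f _ hmj.le hx, ← Ico_add_one_right_eq_Icc, sum_Ico_succ_top (by omega),
    sum_Ico_succ_top (by omega), sum_eq_zero, dd_self,
    dd_linear_succ w _ (hx.ne ⟨by omega, by omega⟩ ⟨by omega, le_rfl⟩ (by omega)),
    Nat.add_sub_cancel]
  · ring
  · intro i hi
    have := mem_Ico.1 hi
    rw [dd_linear_eq_zero w (by omega) (hx.mono (Set.Icc_subset_Icc_left (by omega))), mul_zero]

theorem dd_linear_mul (g : ℂ → ℂ) (w : ℂ) {m j : ℕ} (hmj : m < j)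
    (hx : Set.InjOn x (Set.Icc m j)) :
    dd x (fun z => (w + z) * g z) m j = (w + x m) * dd x g m j + dd x g (m + 1) j := by
  have hrec := sub_mul_dd g hmj (hx.ne ⟨le_rfl, hmj.le⟩ ⟨hmj.le, le_rfl⟩ hmj.ne)
  simp_rw [mul_comm (w + _)]
  rw [dd_mul_linear g w hmj hx]
  linear_combination -hrec

theorem sum_dd_mul_linear_mul_dd (f g : ℂ → ℂ) (w : ℂ) {l k j : ℕ} (hlk : l ≤ k) (hkj : k ≤ j)
    (hx : Set.InjOn x (Set.Icc l j)) :
    ∑ i ∈ Icc l k, dd x (fun z => f z * (w + z)) l i * dd x g i j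
      = ∑ i ∈ Ico l k, dd x f l i * dd x (fun z => (w + z) * g z) i j
        + (w + x k) * dd x f l k * dd x g k j := by
  induction k, hlk using Nat.le_induction with
  | base => simp [dd_self, mul_comm]
  | succ k hlk ih =>
    rw [sum_Icc_succ_top (by omega), ih (by omega), sum_Ico_succ_top hlk,
      dd_mul_linear f w (by omega) (hx.mono (Set.Icc_subset_Icc_right hkj)),
      dd_linear_mul g w (by omega) (hx.mono (Set.Icc_subset_Icc_left hlk)), Nat.add_sub_cancel]
    ring

end DividedDifference

section LinearProd

variable {x : ℕ → ℂ} (c : ℕ → ℂ)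

theorem linearProd_succ_top {m j : ℕ} (h : m ≤ j + 1) :
    linearProd c m (j + 1) = fun z => linearProd c m j z * (c (j + 1) + z) :=
  funext fun _ => prod_Icc_succ_top h _

theorem linearProd_succ_bot {m j : ℕ} (h : m ≤ j) :
    linearProd c m j = fun z => (c m + z) * linearProd c (m + 1) j z :=
  funext fun _ => by
    rw [linearProd, linearProd, ← mul_prod_Ioc_eq_prod_Icc h, Icc_add_one_left_eq_Ioc]

theorem linearProd_mul {m k j : ℕ} (hmk : m ≤ k + 1) (hkj : k ≤ j) :
    (fun z => linearProd c m k z * linearProd c (k + 1) j z) = linearProd c m j :=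
  funext fun _ => by
    simp only [linearProd, ← Ico_add_one_right_eq_Icc]
    exact prod_Ico_consecutive _ hmk (by omega)

theorem sum_Ico_dd_linearProd {a l m j N : ℕ} (ha : a ≤ l + 1) (hlm : l ≤ m) (hmj : m ≤ j + 1)
    (hmN : m ≤ N) (hx : Set.InjOn x (Set.Icc l j)) :
    ∑ k ∈ Ico l m,
        dd x (linearProd c a k) l k * (c (k + 1) + x k) * dd x (linearProd c (k + 2) N) k j
      = ∑ i ∈ Ico l m, dd x (linearProd c a m) l i * dd x (linearProd c (m + 1) N) i j := by
  induction m, hlm using Nat.le_induction with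
  | base => simp
  | succ m hlm ih =>
    rw [sum_Ico_succ_top hlm, ih (by omega) (by omega), Ico_add_one_right_eq_Icc,
      linearProd_succ_top c (by omega), sum_dd_mul_linear_mul_dd _ _ _ hlm (by omega) hx,
      ← linearProd_succ_bot c (by omega)]
    ring

theorem sum_dd_linearProd {a l j N : ℕ} (ha : a ≤ l + 1) (hlj : l ≤ j) (hjN : j + 1 ≤ N)
    (hx : Set.InjOn x (Set.Icc l j)) :
    ∑ k ∈ Icc l j,
        dd x (linearProd c a k) l k * (c (k + 1) + x k) * dd x (linearProd c (k + 2) N) k j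
      = dd x (linearProd c a N) l j := by
  rw [← Ico_add_one_right_eq_Icc, sum_Ico_dd_linearProd c ha (by omega) le_rfl hjN hx,
    Ico_add_one_right_eq_Icc, ← dd_mul _ _ hlj hx, linearProd_mul c (by omega) hjN]

end LinearProd

/-- Second identity of the technical lemma for modified divided differences. -/
theorem dd_prod_identity (x : ℕ → ℂ) (n : ℕ)
    (hdist : ∀ i j, i ≤ n → j ≤ n → i ≠ j → x i ≠ x j)
    (P : ℕ → ℕ → ℂ → ℂ)
    (hP : ∀ m j z, P m j z = ∏ k ∈ Finset.Icc m j, (x k + z)) :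
    ∀ ℓ j, 2 ≤ ℓ → ℓ ≤ j → j ≤ n - 2 →
      ∑ k ∈ Finset.Icc ℓ j,
        dd x (P 2 k) ℓ k * dd x (P (k + 1) (k + 1)) k k * dd x (P (k + 2) n) k j
      = dd x (P 2 n) ℓ j := by
  intro ℓ j hℓ hℓj hjn
  obtain rfl : P = linearProd x := funext₂ fun m j => funext (hP m j)
  have hx : Set.InjOn x (Set.Icc ℓ j) := fun i hi k hk hxik =>
    by_contra fun hik => hdist i k (hi.2.trans (by omega)) (hk.2.trans (by omega)) hik hxik
  have hmid : ∀ k, dd x (linearProd x (k + 1) (k + 1)) k k = x (k + 1) + x k := by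
    simp [dd_self, linearProd]
  simp only [hmid]
  exact sum_dd_linearProd x (by omega) hℓj (by omega) hx
end
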